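/- Let Π be a CNF theory, M a model of Π, and S the steady set of M for Π. Then no clause of the form h ← ∅ (a fact, single atom head and empty body) occurs in the simplified theory (simpl(Π,M))_{M\S}. -/

import Mathlib

structure Clause where
  head : Finset ℕ
  body : Finset ℕ
deriving DecidableEq

abbrev Theory := Finset Clause

/-- interpretation I satisfies clause c -/
def satC (I : Finset ℕ) (c : Clause) : Prop :=
  (c.head ∩ I).Nonempty ∨ ¬ c.body ⊆ I

def isModel (T : Theory) (I : Finset ℕ) : Prop := ∀ c ∈ T, satC I c

def isMinModel (T : Theory) (I : Finset ℕ) : Prop :=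
  isModel T I ∧ ∀ J ⊂ I, ¬ isModel T J

def Positive (T : Theory) : Prop := ∀ c ∈ T, c.head.Nonempty

def Horn (T : Theory) : Prop := ∀ c ∈ T, c.head.card = 1

/-- atoms occurring in a theory -/
def atoms (T : Theory) : Finset ℕ := T.biUnion (fun c => c.head ∪ c.body)

/-- c_{X←} : project head on X -/
def projHeadC (c : Clause) (X : Finset ℕ) : Clause := ⟨c.head ∩ X, c.body⟩
/-- c_X : project head and body on X -/
def projC (c : Clause) (X : Finset ℕ) : Clause := ⟨c.head ∩ X, c.body ∩ X⟩

/-- Π_{X←} -/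
def projHeadT (T : Theory) (X : Finset ℕ) : Theory :=
  (T.image (fun c => projHeadC c X)).filter (fun c => c.head.Nonempty)

/-- Π_X -/
def projT (T : Theory) (X : Finset ℕ) : Theory :=
  (T.image (fun c => projC c X)).filter (fun c => c.head.Nonempty)

/-- Π^{nd} : single-head fragment -/
def nd (T : Theory) : Theory := T.filter (fun c => c.head.card = 1)

/-- the steady set of M for Π is the minimal model of Π^{nd}_{M←} -/
def isSteady (T : Theory) (M S : Finset ℕ) : Prop :=
  isMinModel (nd (projHeadT T M)) S

def simpl (T : Theory) (M S : Finset ℕ) : Theory :=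
  T.filter (fun c => c.head ∩ S = ∅ ∧ c.body ⊆ M)

/-- simplified theory of Π w.r.t. M (with steady set S) -/
def simplT (T : Theory) (M S : Finset ℕ) : Theory := projT (simpl T M S) (M \ S)

/-- E erasable in M for T -/
def Erasable (T : Theory) (M E : Finset ℕ) : Prop :=
  E.Nonempty ∧ E ⊆ M ∧ isModel T (M \ E)

def Outbound (T : Theory) (Y Z : Finset ℕ) : Prop :=
  ∃ c ∈ T, (c.head ∩ Z).Nonempty ∧ (c.body ∩ (Y \ Z)).Nonempty ∧
    c.body ∩ Z = ∅ ∧ c.head ∩ (Y \ Z) = ∅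

def Elementary (T : Theory) (Y : Finset ℕ) : Prop :=
  Y.Nonempty ∧ Y ⊆ atoms T ∧ ∀ Z, Z ⊂ Y → Z.Nonempty → Outbound T Y Z

def HEF (T : Theory) : Prop :=
  ∀ c ∈ T, ∀ E, Elementary T E → (E ∩ c.head).card ≤ 1

def DisjunctiveSet (T : Theory) (S : Finset ℕ) : Prop :=
  ∃ c ∈ T, 1 < (c.head ∩ S).card

def SuperElementary (T : Theory) (X : Finset ℕ) : Prop :=
  Elementary T X ∧ ¬ Outbound T (atoms T) X

def posForm (T : Theory) (phi : ℕ) : Theory :=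
  T.filter (fun c => c.head.Nonempty) ∪
  (T.filter (fun c => c.head = ∅)).image (fun c => ⟨{phi}, c.body⟩) ∪
  (atoms T).image (fun a => ⟨{a}, {phi}⟩)


/-! A fact `h ← ∅` of the simplified theory comes from a clause `H ← B` of `Π` with `H ∩ S = ∅`,
`B ⊆ M` and `B ∩ (M \ S) = ∅`, so `B ⊆ S`, and with `H ∩ M = H ∩ (M \ S)` a single atom.
Then `H ∩ M ← B` is a clause of `Π^{nd}_{M←}` whose body holds in its model `S`, which forces
`S` to meet `H`. -/

theorem Finset.inter_sdiff_eq_inter_of_inter_eq_empty {α : Type*} [DecidableEq α]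
    {A M S : Finset α} (h : A ∩ S = ∅) : A ∩ (M \ S) = A ∩ M := by
  rw [← Finset.inter_sdiff_assoc, Finset.sdiff_eq_self_of_disjoint]
  exact Finset.disjoint_of_subset_left Finset.inter_subset_left
    (Finset.disjoint_iff_inter_eq_empty.mpr h)

theorem Finset.subset_of_inter_sdiff_eq_empty {α : Type*} [DecidableEq α] {A M S : Finset α}
    (hA : A ⊆ M) (h : A ∩ (M \ S) = ∅) : A ⊆ S := by
  intro x hx
  by_contra hxS
  have hx' : x ∈ A ∩ (M \ S) := Finset.mem_inter.mpr ⟨hx, Finset.mem_sdiff.mpr ⟨hA hx, hxS⟩⟩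
  simp [h] at hx'

theorem mem_projT {T : Theory} {X : Finset ℕ} {c : Clause} :
    c ∈ projT T X ↔ (∃ c₀ ∈ T, projC c₀ X = c) ∧ c.head.Nonempty := by
  simp only [projT, Finset.mem_filter, Finset.mem_image]

theorem mem_simpl {T : Theory} {M S : Finset ℕ} {c : Clause} :
    c ∈ simpl T M S ↔ c ∈ T ∧ c.head ∩ S = ∅ ∧ c.body ⊆ M := by
  simp only [simpl, Finset.mem_filter]

theorem projHeadC_mem_nd_projHeadT {T : Theory} {X : Finset ℕ} {c : Clause} (hc : c ∈ T)
    (hcard : (c.head ∩ X).card = 1) : projHeadC c X ∈ nd (projHeadT T X) := by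
  simp only [nd, projHeadT, Finset.mem_filter, Finset.mem_image]
  exact ⟨⟨⟨c, hc, rfl⟩, Finset.card_pos.mp (by simp only [projHeadC]; omega)⟩, hcard⟩

theorem isSteady.inter_nonempty_of_body_subset {T : Theory} {M S : Finset ℕ}
    (hS : isSteady T M S) {c : Clause} (hc : c ∈ T) (hcard : (c.head ∩ M).card = 1)
    (hbody : c.body ⊆ S) : (c.head ∩ S).Nonempty := by
  rcases hS.1 _ (projHeadC_mem_nd_projHeadT hc hcard) with hhead | hbody'
  · exact hhead.mono (Finset.inter_subset_inter_right Finset.inter_subset_left)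
  · exact absurd hbody hbody'

theorem stmt5_general (T : Theory) (M S : Finset ℕ) (hS : isSteady T M S) :
    ∀ c ∈ simplT T M S, ¬ (c.head.card = 1 ∧ c.body = ∅) := by
  rintro c hc ⟨hcard, hbody⟩
  obtain ⟨⟨c₀, hc₀, rfl⟩, -⟩ := mem_projT.mp hc
  obtain ⟨hc₀T, hheadS, hbodyM⟩ := mem_simpl.mp hc₀
  have hheadM : c₀.head ∩ (M \ S) = c₀.head ∩ M :=
    Finset.inter_sdiff_eq_inter_of_inter_eq_empty hheadS
  have hcard' : (c₀.head ∩ M).card = 1 := hheadM ▸ hcard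
  have hbodyS : c₀.body ⊆ S := Finset.subset_of_inter_sdiff_eq_empty hbodyM hbody
  exact (hS.inter_nonempty_of_body_subset hc₀T hcard' hbodyS).ne_empty hheadS

theorem stmt5 (T : Theory) (M S : Finset ℕ) (hM : isModel T M) (hS : isSteady T M S) :
    ∀ c ∈ simplT T M S, ¬ (c.head.card = 1 ∧ c.body = ∅) :=
  stmt5_general T M S hS
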